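/- For nondeterministic Val-automata with a present-focused and suffix-monotonic value function Val, history determinism implies determinizability by pruning; combined with the converse, history determinism and determinizability by pruning coincide for such automata. -/

import Mathlib

/-- A nondeterministic quantitative automaton over alphabet `A`:
states, an initial state, and a total transition relation with rational weights. -/
structure NQA (A : Type) where
  Q : Type
  init : Q
  δ : Q → A → Set (ℚ × Q)
  total : ∀ q a, (δ q a).Nonempty

/-- `IsRunFrom M q u xs`: `xs` is the weight sequence of a run of `M` on the
finite word `u` starting in state `q`. -/
inductive IsRunFrom {A : Type} (M : NQA A) : M.Q → List A → List ℚ → Prop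
  | nil (q : M.Q) : IsRunFrom M q [] []
  | cons {q : M.Q} {a : A} {u : List A} {x : ℚ} {q' : M.Q} {xs : List ℚ} :
      (x, q') ∈ M.δ q a → IsRunFrom M q' u xs → IsRunFrom M q (a :: u) (x :: xs)

/-- The value of the automaton on a finite word: supremum of values of runs. -/
noncomputable def AVal {A : Type} (M : NQA A) (Val : List ℚ → ℝ) (u : List A) : ℝ :=
  sSup {r : ℝ | ∃ xs, IsRunFrom M M.init u xs ∧ Val xs = r}

/-- The state reached by Eve's letter-game strategy `s` (which picks a
transition from the word read so far and the current letter) after reading `u`,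
starting from state `q` with word-history `pre`. -/
def stratStateAux {A : Type} (M : NQA A) (s : List A → A → ℚ × M.Q)
    (pre : List A) (q : M.Q) : List A → M.Q
  | [] => q
  | a :: u => stratStateAux M s (pre ++ [a]) (s pre a).2 u

/-- The state reached by strategy `s` after the word `u`. -/
def stratState {A : Type} (M : NQA A) (s : List A → A → ℚ × M.Q) (u : List A) : M.Q :=
  stratStateAux M s [] M.init u

/-- The weights of the run built by strategy `s` on the word `u`. -/
def stratWeightsAux {A : Type} (M : NQA A) (s : List A → A → ℚ × M.Q)
    (pre : List A) : List A → List ℚ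
  | [] => []
  | a :: u => (s pre a).1 :: stratWeightsAux M s (pre ++ [a]) u

def stratWeights {A : Type} (M : NQA A) (s : List A → A → ℚ × M.Q) (u : List A) : List ℚ :=
  stratWeightsAux M s [] u

/-- The strategy only uses transitions of the automaton. -/
def StratLegal {A : Type} (M : NQA A) (s : List A → A → ℚ × M.Q) : Prop :=
  ∀ u a, s u a ∈ M.δ (stratState M s u) a

/-- A strategy of Eve in the letter game is cautious if it never makes a move
after which the best achievable value of some continuation strictly drops. -/
def Cautious {A : Type} (M : NQA A) (Val : List ℚ → ℝ) (s : List A → A → ℚ × M.Q) : Prop :=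
  StratLegal M s ∧
  ∀ u a v,
    sSup {r : ℝ | ∃ xs, IsRunFrom M (stratState M s u) (a :: v) xs ∧
        r = Val (stratWeights M s u ++ xs)} ≤
    sSup {r : ℝ | ∃ ys, IsRunFrom M (s u a).2 v ys ∧
        r = Val (stratWeights M s u ++ (s u a).1 :: ys)}

/-- `M` is history deterministic: Eve wins her letter game, i.e. she has a
strategy building, letter by letter, runs achieving the automaton's value. -/
def HistoryDet {A : Type} (M : NQA A) (Val : List ℚ → ℝ) : Prop :=
  ∃ s : List A → A → ℚ × M.Q, StratLegal M s ∧
    ∀ u : List A, AVal M Val u ≤ Val (stratWeights M s u)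

/-- Weights of the run of the pruned (deterministic) automaton given by the
choice function `σ` from state `q` on a word. -/
def detWeights {A : Type} (M : NQA A) (σ : M.Q → A → ℚ × M.Q) : M.Q → List A → List ℚ
  | _, [] => []
  | q, a :: u => (σ q a).1 :: detWeights M σ (σ q a).2 u

/-- `M` is determinizable by pruning: some choice of a single transition per
state-letter pair yields an equivalent deterministic automaton. -/
def DetByPruning {A : Type} (M : NQA A) (Val : List ℚ → ℝ) : Prop :=
  ∃ σ : M.Q → A → ℚ × M.Q, (∀ q a, σ q a ∈ M.δ q a) ∧
    ∀ u : List A, Val (detWeights M σ M.init u) = AVal M Val u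

/-!
Suffix monotonicity makes the comparison of two continuations independent of the prefix read so
far. Hence every move of a winning letter-game strategy is safe at the state where it is played:
each run from that state is matched, after that move, by a run of at least the same value (finite
branching keeps the suprema of run values bounded). Choosing a safe move at every state the
strategy reaches gives a pruning that never leaves these states; the positional strategy playing it
is cautious, so by present-focus it attains the automaton's value on every word. Conversely, a
pruning is itself a winning positional strategy.
-/

def SuffixMonotone (Val : List ℚ → ℝ) : Prop :=
  ∀ α β β' : List ℚ, Val β ≤ Val β' ↔ Val (α ++ β) ≤ Val (α ++ β')

theorem suffixMonotone_of_finset {Val : List ℚ → ℝ}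
    (hSM : ∀ (S : Finset ℚ) (α β β' : List ℚ),
      (∀ x ∈ α, x ∈ S) → (∀ x ∈ β, x ∈ S) → (∀ x ∈ β', x ∈ S) →
      (Val β ≥ Val β' ↔ Val (α ++ β) ≥ Val (α ++ β'))) :
    SuffixMonotone Val := by
  classical
  intro α β β'
  refine hSM (α ++ β' ++ β).toFinset α β' β ?_ ?_ ?_ <;> intro x hx <;> simp [hx]

section Runs

variable {A : Type} (M : NQA A)

theorem exists_isRunFrom : ∀ (q : M.Q) (u : List A), ∃ xs, IsRunFrom M q u xs
  | q, [] => ⟨[], .nil q⟩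
  | q, a :: u => by
    obtain ⟨⟨x, q'⟩, ht⟩ := M.total q a
    obtain ⟨xs, hxs⟩ := exists_isRunFrom q' u
    exact ⟨x :: xs, .cons ht hxs⟩

theorem finite_setOf_isRunFrom (hfin : ∀ q a, (M.δ q a).Finite) :
    ∀ (q : M.Q) (u : List A), {xs | IsRunFrom M q u xs}.Finite
  | q, [] => (Set.finite_singleton []).subset fun xs hxs => by cases hxs; rfl
  | q, a :: u => by
    refine ((hfin q a).biUnion fun t _ =>
      (finite_setOf_isRunFrom hfin t.2 u).image (t.1 :: ·)).subset ?_
    intro xs hxs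
    cases hxs with
    | cons ht hxs => exact Set.mem_biUnion ht ⟨_, hxs, rfl⟩

theorem bddAbove_image_setOf_isRunFrom (hfin : ∀ q a, (M.δ q a).Finite) (f : List ℚ → ℝ)
    (q : M.Q) (u : List A) : BddAbove (f '' {xs | IsRunFrom M q u xs}) :=
  ((finite_setOf_isRunFrom M hfin q u).image f).bddAbove

end Runs

section Strategies

variable {A : Type} (M : NQA A) (s : List A → A → ℚ × M.Q)

theorem stratStateAux_append_singleton (u : List A) (a : A) :
    ∀ (pre : List A) (q : M.Q), stratStateAux M s pre q (u ++ [a]) = (s (pre ++ u) a).2 := by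
  induction u with
  | nil => simp [stratStateAux]
  | cons b u ih => intro pre q; simp [stratStateAux, ih]

theorem stratWeightsAux_append_singleton (u : List A) (a : A) :
    ∀ pre : List A,
      stratWeightsAux M s pre (u ++ [a]) = stratWeightsAux M s pre u ++ [(s (pre ++ u) a).1] := by
  induction u with
  | nil => simp [stratWeightsAux]
  | cons b u ih => intro pre; simp [stratWeightsAux, ih]

theorem stratState_append_singleton (u : List A) (a : A) :
    stratState M s (u ++ [a]) = (s u a).2 := by
  simpa [stratState] using stratStateAux_append_singleton M s u a [] M.init

theorem stratWeights_append_singleton (u : List A) (a : A) :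
    stratWeights M s (u ++ [a]) = stratWeights M s u ++ [(s u a).1] := by
  simpa [stratWeights] using stratWeightsAux_append_singleton M s u a []

variable {M s}

theorem IsRunFrom.stratWeights_append (hs : StratLegal M s) (u : List A) :
    ∀ {v : List A} {xs : List ℚ}, IsRunFrom M (stratState M s u) v xs →
      IsRunFrom M M.init (u ++ v) (stratWeights M s u ++ xs) := by
  induction u using List.reverseRecOn with
  | nil => intro v xs h; simpa [stratState, stratStateAux, stratWeights, stratWeightsAux] using h
  | append_singleton u a ih =>
    intro v xs h
    rw [stratState_append_singleton] at h
    simpa [stratWeights_append_singleton] using ih (.cons (hs u a) h)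

theorem exists_stratWeights_append (hs : StratLegal M s) :
    ∀ (u v : List A), ∃ zs, IsRunFrom M (stratState M s u) v zs ∧
      stratWeights M s (u ++ v) = stratWeights M s u ++ zs
  | u, [] => ⟨[], .nil _, by simp⟩
  | u, a :: v => by
    obtain ⟨zs, hzs, heq⟩ := exists_stratWeights_append hs (u ++ [a]) v
    rw [stratState_append_singleton] at hzs
    refine ⟨(s u a).1 :: zs, .cons (hs u a) hzs, ?_⟩
    simpa [stratWeights_append_singleton] using heq

end Strategies

section Pruning

variable {A : Type} (M : NQA A) (σ : M.Q → A → ℚ × M.Q)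

def detState : M.Q → List A → M.Q
  | q, [] => q
  | q, a :: u => detState (σ q a).2 u

theorem detState_append :
    ∀ (q : M.Q) (u v : List A), detState M σ q (u ++ v) = detState M σ (detState M σ q u) v
  | _, [], _ => rfl
  | q, a :: u, v => detState_append (σ q a).2 u v

theorem detWeights_append : ∀ (q : M.Q) (u v : List A),
    detWeights M σ q (u ++ v) = detWeights M σ q u ++ detWeights M σ (detState M σ q u) v
  | _, [], _ => rfl
  | q, a :: u, v => by simp [detWeights, detState, detWeights_append (σ q a).2 u v]

def pruningStrat (u : List A) (a : A) : ℚ × M.Q := σ (detState M σ M.init u) a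

theorem stratState_pruningStrat (u : List A) :
    stratState M (pruningStrat M σ) u = detState M σ M.init u := by
  induction u using List.reverseRecOn with
  | nil => rfl
  | append_singleton u a ih =>
    rw [stratState_append_singleton, detState_append]
    rfl

theorem stratWeights_pruningStrat (u : List A) :
    stratWeights M (pruningStrat M σ) u = detWeights M σ M.init u := by
  induction u using List.reverseRecOn with
  | nil => rfl
  | append_singleton u a ih =>
    rw [stratWeights_append_singleton, detWeights_append, ih]
    rfl

variable {M σ}

theorem stratLegal_pruningStrat (hσ : ∀ q a, σ q a ∈ M.δ q a) :
    StratLegal M (pruningStrat M σ) := fun u a => by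
  rw [stratState_pruningStrat]
  exact hσ _ a

end Pruning

section SafeMoves

variable {A : Type} {M : NQA A} {Val : List ℚ → ℝ}

/-- A positional, prefix-free form of a cautious move. -/
def SafeMove (M : NQA A) (Val : List ℚ → ℝ) (q : M.Q) (a : A) (t : ℚ × M.Q) : Prop :=
  ∀ v xs, IsRunFrom M q (a :: v) xs → ∃ ys, IsRunFrom M t.2 v ys ∧ Val xs ≤ Val (t.1 :: ys)

theorem safeMove_of_winning (hsm : SuffixMonotone Val) (hfin : ∀ q a, (M.δ q a).Finite)
    {s : List A → A → ℚ × M.Q} (hs : StratLegal M s)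
    (hwin : ∀ u, AVal M Val u ≤ Val (stratWeights M s u)) (u : List A) (a : A) :
    SafeMove M Val (stratState M s u) a (s u a) := by
  intro v xs hxs
  obtain ⟨zs, hzs, heq⟩ := exists_stratWeights_append hs (u ++ [a]) v
  rw [stratState_append_singleton] at hzs
  refine ⟨zs, hzs, (hsm (stratWeights M s u) _ _).2 ?_⟩
  calc Val (stratWeights M s u ++ xs)
      ≤ AVal M Val (u ++ a :: v) :=
        le_csSup (bddAbove_image_setOf_isRunFrom M hfin Val _ _)
          ⟨_, hxs.stratWeights_append hs u, rfl⟩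
    _ ≤ Val (stratWeights M s (u ++ a :: v)) := hwin _
    _ = Val (stratWeights M s u ++ (s u a).1 :: zs) := by
        rw [← List.singleton_append, ← List.append_assoc, heq, stratWeights_append_singleton,
          List.append_assoc, List.singleton_append]

theorem cautious_pruningStrat (hsm : SuffixMonotone Val) (hfin : ∀ q a, (M.δ q a).Finite)
    {σ : M.Q → A → ℚ × M.Q} (hσ : ∀ q a, σ q a ∈ M.δ q a)
    (hsafe : ∀ u a, SafeMove M Val (detState M σ M.init u) a (σ (detState M σ M.init u) a)) :
    Cautious M Val (pruningStrat M σ) := by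
  refine ⟨stratLegal_pruningStrat hσ, fun u a v => ?_⟩
  obtain ⟨xs₀, hxs₀⟩ := exists_isRunFrom M (stratState M (pruningStrat M σ) u) (a :: v)
  refine csSup_le ⟨_, xs₀, hxs₀, rfl⟩ ?_
  rintro _ ⟨xs, hxs, rfl⟩
  rw [stratState_pruningStrat] at hxs
  obtain ⟨ys, hys, hle⟩ := hsafe u a v xs hxs
  obtain ⟨B, hB⟩ := bddAbove_image_setOf_isRunFrom M hfin
    (fun ys => Val (stratWeights M (pruningStrat M σ) u ++ (pruningStrat M σ u a).1 :: ys))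
    (pruningStrat M σ u a).2 v
  have hbdd : BddAbove {r | ∃ ys, IsRunFrom M (pruningStrat M σ u a).2 v ys ∧
      r = Val (stratWeights M (pruningStrat M σ) u ++ (pruningStrat M σ u a).1 :: ys)} :=
    ⟨B, by rintro _ ⟨ys, hys, rfl⟩; exact hB ⟨ys, hys, rfl⟩⟩
  exact ((hsm _ _ _).1 hle).trans (le_csSup hbdd ⟨ys, hys, rfl⟩)

theorem exists_pruning_safe (R : Set M.Q) (hinit : M.init ∈ R)
    (hR : ∀ q ∈ R, ∀ a, ∃ t ∈ M.δ q a, t.2 ∈ R ∧ SafeMove M Val q a t) :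
    ∃ σ : M.Q → A → ℚ × M.Q, (∀ q a, σ q a ∈ M.δ q a) ∧
      ∀ u a, SafeMove M Val (detState M σ M.init u) a (σ (detState M σ M.init u) a) := by
  have hchoice : ∀ q a, ∃ t ∈ M.δ q a, q ∈ R → t.2 ∈ R ∧ SafeMove M Val q a t := by
    intro q a
    by_cases hq : q ∈ R
    · obtain ⟨t, ht, hsafe⟩ := hR q hq a
      exact ⟨t, ht, fun _ => hsafe⟩
    · exact ⟨(M.total q a).some, (M.total q a).some_mem, fun h => absurd h hq⟩
  choose σ hσ hσR using hchoice
  have hreach : ∀ u q, q ∈ R → detState M σ q u ∈ R := by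
    intro u
    induction u with
    | nil => exact fun q hq => hq
    | cons a u ih => exact fun q hq => ih _ (hσR q a hq).1
  exact ⟨σ, hσ, fun u a => (hσR _ a (hreach u _ hinit)).2⟩

end SafeMoves

section Main

variable {A : Type} {M : NQA A} {Val : List ℚ → ℝ}

theorem HistoryDet.detByPruning
    (hPF : ∀ s : List A → A → ℚ × M.Q, Cautious M Val s →
      ∀ u : List A, Val (stratWeights M s u) = AVal M Val u)
    (hsm : SuffixMonotone Val) (hfin : ∀ q a, (M.δ q a).Finite) (h : HistoryDet M Val) :
    DetByPruning M Val := by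
  obtain ⟨s, hs, hwin⟩ := h
  obtain ⟨σ, hσ, hsafe⟩ := exists_pruning_safe (Set.range (stratState M s)) ⟨[], rfl⟩ <| by
    rintro _ ⟨u, rfl⟩ a
    exact ⟨s u a, hs u a, ⟨u ++ [a], stratState_append_singleton M s u a⟩,
      safeMove_of_winning hsm hfin hs hwin u a⟩
  refine ⟨σ, hσ, fun u => ?_⟩
  rw [← stratWeights_pruningStrat]
  exact hPF _ (cautious_pruningStrat hsm hfin hσ hsafe) u

theorem DetByPruning.historyDet (h : DetByPruning M Val) : HistoryDet M Val := by
  obtain ⟨σ, hσ, hval⟩ := h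
  exact ⟨pruningStrat M σ, stratLegal_pruningStrat hσ, fun u => by
    rw [stratWeights_pruningStrat, hval]⟩

end Main

/-- For nondeterministic Val-automata with a present-focused and
suffix-monotonic value function, history determinism and determinizability by
pruning coincide. -/
theorem hd_iff_dbp {A : Type} (Val : List ℚ → ℝ)
    (hPF : ∀ (M' : NQA A) (s' : List A → A → ℚ × M'.Q), Cautious M' Val s' →
      ∀ u : List A, Val (stratWeights M' s' u) = AVal M' Val u)
    (hSM : ∀ (S : Finset ℚ) (α β β' : List ℚ),
      (∀ x ∈ α, x ∈ S) → (∀ x ∈ β, x ∈ S) → (∀ x ∈ β', x ∈ S) →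
      (Val β ≥ Val β' ↔ Val (α ++ β) ≥ Val (α ++ β')))
    (M : NQA A) (hfin : ∀ q a, (M.δ q a).Finite) :
    HistoryDet M Val ↔ DetByPruning M Val :=
  ⟨HistoryDet.detByPruning (hPF M) (suffixMonotone_of_finset hSM) hfin,
    DetByPruning.historyDet⟩
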